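/- Let φ and φ* both be Bernstein functions of Lévy–Khintchine form, with triplets (q,a,Π) and (q*,a*,Π*) respectively, such that φ(λ) · φ*(λ) = λ for all λ > 0 (a conjugate pair of special Bernstein functions), and let H and H* be their harmonic potential measures. Then H(dx) + H*(dx) = x^{−1} dx as measures on (0,∞); consequently there exists a measurable function ρ : (0,∞) → [0,1] such that H(dx) = ρ(x) x^{−1} dx and H*(dx) = (1 − ρ(x)) x^{−1} dx. -/

import Mathlib

/-!
Since `φ φ* = λ`, the logarithmic derivatives add up, `φ'/φ + φ*'/φ* = 1/λ`, and both are
nonnegative because a Lévy–Khintchine function is nondecreasing. So `H + H*` and `x⁻¹ dx` have the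
same transform `λ ↦ ∫ x e^{-λx} (·)(dx)`, namely `1/λ`. This transform determines a measure on
`(0, ∞)`: after weighting by `x e^{-x}` and pushing forward along `x ↦ e^{-x}` it becomes the moment
sequence of a finite measure on `[0, 1]`, which determines it by Weierstrass approximation. Finally
`ρ` is the Radon–Nikodym derivative of `H` with respect to `H + H*`.
-/

open MeasureTheory Real Set Filter Topology
open scoped ENNReal

lemma ae_pos_of_measure_Iic_eq_zero {ν : Measure ℝ} (hν : ν (Iic 0) = 0) : ∀ᵐ x ∂ν, 0 < x := by
  simpa [not_le] using measure_eq_zero_iff_ae_notMem.mp hν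

lemma Continuous.integrable_of_ae_mem_Icc {f : ℝ → ℝ} (hf : Continuous f) {κ : Measure ℝ}
    [IsFiniteMeasure κ] (hκ : ∀ᵐ x ∂κ, x ∈ Icc (0 : ℝ) 1) : Integrable f κ := by
  rw [← Measure.restrict_eq_self_of_ae_mem hκ]
  exact hf.continuousOn.integrableOn_compact isCompact_Icc

lemma integral_eval_eq_of_integral_pow_eq {κ₁ κ₂ : Measure ℝ} [IsFiniteMeasure κ₁]
    [IsFiniteMeasure κ₂] (h₁ : ∀ᵐ x ∂κ₁, x ∈ Icc (0 : ℝ) 1) (h₂ : ∀ᵐ x ∂κ₂, x ∈ Icc (0 : ℝ) 1)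
    (h : ∀ n : ℕ, ∫ x, x ^ n ∂κ₁ = ∫ x, x ^ n ∂κ₂) (p : Polynomial ℝ) :
    ∫ x, p.eval x ∂κ₁ = ∫ x, p.eval x ∂κ₂ := by
  simp_rw [Polynomial.eval_eq_sum_range]
  rw [integral_finsetSum _ fun i _ => ((continuous_pow i).integrable_of_ae_mem_Icc h₁).const_mul _,
    integral_finsetSum _ fun i _ => ((continuous_pow i).integrable_of_ae_mem_Icc h₂).const_mul _]
  simp_rw [integral_const_mul, h]

lemma dist_integral_eval_le {κ : Measure ℝ} [IsFiniteMeasure κ]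
    (hκ : ∀ᵐ x ∂κ, x ∈ Icc (0 : ℝ) 1) {f : ℝ → ℝ} (hf : Continuous f) {p : Polynomial ℝ}
    {δ : ℝ} (hp : ∀ x ∈ Icc (0 : ℝ) 1, |p.eval x - f x| < δ) :
    dist (∫ x, f x ∂κ) (∫ x, p.eval x ∂κ) ≤ δ * κ.real univ := by
  rw [dist_eq_norm, ← integral_sub (hf.integrable_of_ae_mem_Icc hκ)
    (p.continuous.integrable_of_ae_mem_Icc hκ)]
  refine norm_integral_le_of_norm_le_const ?_
  filter_upwards [hκ] with x hx
  rw [Real.norm_eq_abs, abs_sub_comm]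
  exact (hp x hx).le

theorem ext_of_integral_pow_eq {κ₁ κ₂ : Measure ℝ} [IsFiniteMeasure κ₁] [IsFiniteMeasure κ₂]
    (h₁ : ∀ᵐ x ∂κ₁, x ∈ Icc (0 : ℝ) 1) (h₂ : ∀ᵐ x ∂κ₂, x ∈ Icc (0 : ℝ) 1)
    (h : ∀ n : ℕ, ∫ x, x ^ n ∂κ₁ = ∫ x, x ^ n ∂κ₂) : κ₁ = κ₂ := by
  refine ext_of_forall_integral_eq_of_IsFiniteMeasure fun f => eq_of_forall_dist_le fun ε hε => ?_
  set M := κ₁.real univ + κ₂.real univ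
  have hM : 0 ≤ M := by positivity
  obtain ⟨p, hp⟩ := exists_polynomial_near_of_continuousOn 0 1 f f.continuous.continuousOn
    (ε / (M + 1)) (by positivity)
  calc dist (∫ x, f x ∂κ₁) (∫ x, f x ∂κ₂)
      ≤ dist (∫ x, f x ∂κ₁) (∫ x, p.eval x ∂κ₁) + dist (∫ x, f x ∂κ₂) (∫ x, p.eval x ∂κ₂) := by
        rw [integral_eval_eq_of_integral_pow_eq h₁ h₂ h p, dist_comm (∫ x, f x ∂κ₂)]
        exact dist_triangle _ _ _
    _ ≤ ε / (M + 1) * M := by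
        rw [mul_add]
        exact add_le_add (dist_integral_eval_le h₁ f.continuous hp)
          (dist_integral_eval_le h₂ f.continuous hp)
    _ ≤ ε := by
        rw [div_mul_eq_mul_div, div_le_iff₀ (by positivity)]
        nlinarith

theorem ext_of_integral_exp_neg_nat_mul_eq {κ₁ κ₂ : Measure ℝ} [IsFiniteMeasure κ₁]
    [IsFiniteMeasure κ₂] (h₁ : ∀ᵐ x ∂κ₁, 0 ≤ x) (h₂ : ∀ᵐ x ∂κ₂, 0 ≤ x)
    (h : ∀ n : ℕ, ∫ x, exp (-(n * x)) ∂κ₁ = ∫ x, exp (-(n * x)) ∂κ₂) : κ₁ = κ₂ := by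
  have he : MeasurableEmbedding fun x : ℝ => exp (-x) :=
    (continuous_exp.comp continuous_neg).measurableEmbedding
      (exp_injective.comp neg_injective)
  have hsupp {κ : Measure ℝ} (hκ : ∀ᵐ x ∂κ, 0 ≤ x) :
      ∀ᵐ t ∂κ.map fun x => exp (-x), t ∈ Icc (0 : ℝ) 1 := by
    rw [he.ae_map_iff]
    filter_upwards [hκ] with x hx
    exact ⟨(exp_pos _).le, exp_le_one_iff.mpr (neg_nonpos.mpr hx)⟩
  have hmoment (κ : Measure ℝ) (n : ℕ) :
      ∫ t, t ^ n ∂κ.map (fun x => exp (-x)) = ∫ x, exp (-(n * x)) ∂κ := by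
    rw [he.integral_map]
    simp_rw [← exp_nat_mul, mul_neg]
  refine he.map_injective (ext_of_integral_pow_eq (hsupp h₁) (hsupp h₂) fun n => ?_)
  rw [hmoment, hmoment, h]

lemma lintegral_ofReal_exp_neg_withDensity (ν : Measure ℝ) (n : ℕ) :
    ∫⁻ x, ENNReal.ofReal (exp (-(n * x))) ∂ν.withDensity (fun x => ENNReal.ofReal (x * exp (-x)))
      = ∫⁻ x, ENNReal.ofReal (x * exp (-((n + 1 : ℕ) * x))) ∂ν := by
  rw [lintegral_withDensity_eq_lintegral_mul _ (by fun_prop) (by fun_prop)]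
  refine lintegral_congr fun x => ?_
  rw [Pi.mul_apply, ← ENNReal.ofReal_mul' (exp_pos _).le, mul_assoc, ← exp_add]
  push_cast
  ring_nf

theorem ext_of_lintegral_mul_exp_neg_mul_eq {ν₁ ν₂ : Measure ℝ} (h₁ : ν₁ (Iic 0) = 0)
    (h₂ : ν₂ (Iic 0) = 0) (hfin : ∫⁻ x, ENNReal.ofReal (x * exp (-(1 * x))) ∂ν₁ ≠ ∞)
    (h : ∀ l : ℝ, 0 < l → ∫⁻ x, ENNReal.ofReal (x * exp (-(l * x))) ∂ν₁
      = ∫⁻ x, ENNReal.ofReal (x * exp (-(l * x))) ∂ν₂) : ν₁ = ν₂ := by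
  set w : ℝ → ℝ≥0∞ := fun x => ENNReal.ofReal (x * exp (-x))
  have hfinite {ν : Measure ℝ} (hν : ∫⁻ x, ENNReal.ofReal (x * exp (-(1 * x))) ∂ν ≠ ∞) :
      IsFiniteMeasure (ν.withDensity w) :=
    isFiniteMeasure_withDensity (by simpa [w] using hν)
  have := hfinite hfin
  have := hfinite (h 1 one_pos ▸ hfin)
  have hnonneg {ν : Measure ℝ} (hν : ν (Iic 0) = 0) : ∀ᵐ x ∂ν.withDensity w, 0 ≤ x :=
    (withDensity_absolutelyContinuous ν w).ae_le
      ((ae_pos_of_measure_Iic_eq_zero hν).mono fun _ hx => hx.le)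
  have hlaplace (ν : Measure ℝ) (n : ℕ) : ∫ x, exp (-(n * x)) ∂ν.withDensity w
      = (∫⁻ x, ENNReal.ofReal (x * exp (-((n + 1 : ℕ) * x))) ∂ν).toReal := by
    rw [integral_eq_lintegral_of_nonneg_ae (ae_of_all _ fun x => (exp_pos _).le)
      (by fun_prop), lintegral_ofReal_exp_neg_withDensity]
  have hw : ν₁.withDensity w = ν₂.withDensity w := by
    refine ext_of_integral_exp_neg_nat_mul_eq (hnonneg h₁) (hnonneg h₂) fun n => ?_
    rw [hlaplace, hlaplace, h _ (by positivity)]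
  have hrecover {ν : Measure ℝ} (hν : ν (Iic 0) = 0) :
      (ν.withDensity w).withDensity (fun x => (w x)⁻¹) = ν :=
    withDensity_inv_same (by fun_prop) ((ae_pos_of_measure_Iic_eq_zero hν).mono fun x hx => by
      positivity) (ae_of_all _ fun _ => ENNReal.ofReal_ne_top)
  rw [← hrecover h₁, hw, hrecover h₂]

lemma one_sub_exp_neg_mul_le {l x : ℝ} (hx : 0 ≤ x) :
    1 - exp (-(l * x)) ≤ max l 1 * min x 1 := by
  have hlin : 1 - exp (-(l * x)) ≤ l * x := by linarith [add_one_le_exp (-(l * x))]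
  rcases le_total x 1 with hx1 | hx1
  · rw [min_eq_left hx1]
    exact hlin.trans (mul_le_mul_of_nonneg_right (le_max_left l 1) hx)
  · rw [min_eq_right hx1, mul_one]
    linarith [exp_pos (-(l * x)), le_max_right l 1]

lemma integrable_one_sub_exp_neg_mul {ν : Measure ℝ} (hν0 : ν (Iic 0) = 0)
    (hνint : ∫⁻ x, ENNReal.ofReal (min x 1) ∂ν < ∞) {l : ℝ} (hl : 0 ≤ l) :
    Integrable (fun x => 1 - exp (-(l * x))) ν := by
  have hpos := ae_pos_of_measure_Iic_eq_zero hν0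
  have hmin : Integrable (fun x => min x 1) ν := by
    refine ⟨by fun_prop, ?_⟩
    rwa [hasFiniteIntegral_iff_ofReal (hpos.mono fun x hx => le_min hx.le zero_le_one)]
  refine (hmin.const_mul (max l 1)).mono' (by fun_prop) ?_
  filter_upwards [hpos] with x hx
  have : exp (-(l * x)) ≤ 1 := exp_le_one_iff.mpr (by nlinarith)
  rw [Real.norm_of_nonneg (by linarith)]
  exact one_sub_exp_neg_mul_le hx.le

lemma monotoneOn_of_levyKhintchine {q a : ℝ} (ha : 0 ≤ a) {ν : Measure ℝ}
    (hν0 : ν (Iic 0) = 0) (hνint : ∫⁻ x, ENNReal.ofReal (min x 1) ∂ν < ∞) {φ : ℝ → ℝ}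
    (hφ : ∀ l : ℝ, 0 ≤ l → φ l = q + a * l + ∫ x, (1 - exp (-(l * x))) ∂ν) :
    MonotoneOn φ (Ici 0) := by
  intro l₁ hl₁ l₂ hl₂ hl
  have hpos := ae_pos_of_measure_Iic_eq_zero hν0
  rw [hφ l₁ hl₁, hφ l₂ hl₂]
  refine add_le_add (by gcongr) (integral_mono_ae (integrable_one_sub_exp_neg_mul hν0 hνint hl₁)
    (integrable_one_sub_exp_neg_mul hν0 hνint hl₂) (hpos.mono fun x hx => ?_))
  dsimp only
  gcongr

lemma MonotoneOn.deriv_nonneg_of_mem_nhds {f : ℝ → ℝ} {s : Set ℝ} {l : ℝ} (hf : MonotoneOn f s)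
    (hs : s ∈ 𝓝 l) : 0 ≤ deriv f l :=
  hf.derivWithin_nonneg.trans_eq (derivWithin_of_mem_nhds hs)

lemma deriv_div_add_deriv_div_eq_inv {f g : ℝ → ℝ} {l : ℝ} (hf : DifferentiableAt ℝ f l)
    (hg : DifferentiableAt ℝ g l) (hfg : f * g =ᶠ[𝓝 l] id) (hf0 : f l ≠ 0) (hg0 : g l ≠ 0) :
    deriv f l / f l + deriv g l / g l = l⁻¹ := by
  have hprod : deriv f l * g l + f l * deriv g l = 1 :=
    (hf.hasDerivAt.mul hg.hasDerivAt).unique ((hasDerivAt_id l).congr_of_eventuallyEq hfg)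
  have hl : f l * g l = l := hfg.eq_of_nhds
  rw [div_add_div _ _ hf0 hg0, hprod, hl, one_div]

lemma lintegral_mul_exp_neg_mul_withDensity_inv {l : ℝ} (hl : 0 < l) :
    ∫⁻ x, ENNReal.ofReal (x * exp (-(l * x)))
      ∂(volume.restrict (Ioi 0)).withDensity (fun x => ENNReal.ofReal x⁻¹)
      = ENNReal.ofReal l⁻¹ := by
  rw [lintegral_withDensity_eq_lintegral_mul _ (by fun_prop) (by fun_prop),
    setLIntegral_congr_fun measurableSet_Ioi (g := fun x => ENNReal.ofReal (exp (-l * x)))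
      fun x (hx : 0 < x) => by
        rw [Pi.mul_apply, ← ENNReal.ofReal_mul (inv_nonneg.mpr hx.le), inv_mul_cancel_left₀ hx.ne']
        simp only [neg_mul],
    ← ofReal_integral_eq_lintegral_ofReal (integrableOn_exp_mul_Ioi (neg_lt_zero.mpr hl) 0)
      (ae_of_all _ fun x => (exp_pos _).le),
    integral_exp_mul_Ioi (neg_lt_zero.mpr hl), mul_zero, exp_zero, neg_div_neg_eq, one_div]

lemma withDensity_ofReal_div_eq {μ : Measure ℝ} {r : ℝ → ℝ} (hr : Measurable r)
    (hr0 : ∀ x, 0 ≤ r x) :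
    μ.withDensity (fun x => ENNReal.ofReal (r x / x))
      = (μ.withDensity fun x => ENNReal.ofReal x⁻¹).withDensity fun x => ENNReal.ofReal (r x) := by
  rw [← withDensity_mul _ (by fun_prop) (by fun_prop)]
  congr with x
  rw [Pi.mul_apply, div_eq_inv_mul, ENNReal.ofReal_mul' (hr0 x)]

theorem exists_eq_withDensity_of_add_eq {α : Type*} [MeasurableSpace α] {μ ν₁ ν₂ : Measure α}
    [SigmaFinite μ] (h : ν₁ + ν₂ = μ) :
    ∃ ρ : α → ℝ, Measurable ρ ∧ (∀ x, 0 ≤ ρ x ∧ ρ x ≤ 1) ∧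
      ν₁ = μ.withDensity (fun x => ENNReal.ofReal (ρ x)) ∧
      ν₂ = μ.withDensity (fun x => ENNReal.ofReal (1 - ρ x)) := by
  have hle₁ : ν₁ ≤ μ := h ▸ Measure.le_add_right le_rfl
  have hle₂ : ν₂ ≤ μ := h ▸ Measure.le_add_left le_rfl
  have := Measure.sigmaFinite_of_le μ hle₁
  have := Measure.sigmaFinite_of_le μ hle₂
  set g₁ := ν₁.rnDeriv μ
  set g₂ := ν₂.rnDeriv μ
  have hsum : ∀ᵐ x ∂μ, g₁ x + g₂ x = 1 := by
    have hadd := Measure.rnDeriv_add' ν₁ ν₂ μ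
    rw [h] at hadd
    filter_upwards [hadd, Measure.rnDeriv_self μ] with x hx hx1
    rw [← hx1, hx, Pi.add_apply]
  have hle : ∀ᵐ x ∂μ, g₁ x ≤ 1 := Measure.rnDeriv_le_one_of_le hle₁
  refine ⟨fun x => (min (g₁ x) 1).toReal, by fun_prop, fun x => ⟨ENNReal.toReal_nonneg, ?_⟩,
    ?_, ?_⟩
  · exact ENNReal.toReal_le_of_le_ofReal zero_le_one (by simp)
  · rw [← Measure.withDensity_rnDeriv_eq ν₁ μ (Measure.absolutelyContinuous_of_le hle₁)]
    refine withDensity_congr_ae ?_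
    filter_upwards [hle] with x hx
    rw [min_eq_left hx, ENNReal.ofReal_toReal (ne_top_of_le_ne_top ENNReal.one_ne_top hx)]
  · rw [← Measure.withDensity_rnDeriv_eq ν₂ μ (Measure.absolutelyContinuous_of_le hle₂)]
    refine withDensity_congr_ae ?_
    filter_upwards [hle, hsum] with x hx hx1
    have hfin : g₁ x ≠ ∞ := ne_top_of_le_ne_top ENNReal.one_ne_top hx
    rw [min_eq_left hx, ENNReal.ofReal_sub _ ENNReal.toReal_nonneg, ENNReal.ofReal_one,
      ENNReal.ofReal_toReal hfin, ← hx1, ENNReal.add_sub_cancel_left hfin]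

theorem stmt19_general
    (q a : ℝ) (ha : 0 ≤ a)
    (ν : Measure ℝ) (hν0 : ν (Set.Iic 0) = 0)
    (hνint : ∫⁻ x, ENNReal.ofReal (min x 1) ∂ν < ⊤)
    (φ : ℝ → ℝ)
    (hφ : ∀ l : ℝ, 0 ≤ l → φ l = q + a * l + ∫ x, (1 - Real.exp (-(l * x))) ∂ν)
    (hφpos : ∀ l : ℝ, 0 < l → 0 < φ l)
    (hφdiff : ∀ l : ℝ, 0 < l → DifferentiableAt ℝ φ l)
    (qs as : ℝ) (has : 0 ≤ as)
    (νs : Measure ℝ) (hνs0 : νs (Set.Iic 0) = 0)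
    (hνsint : ∫⁻ x, ENNReal.ofReal (min x 1) ∂νs < ⊤)
    (φs : ℝ → ℝ)
    (hφs : ∀ l : ℝ, 0 ≤ l → φs l = qs + as * l + ∫ x, (1 - Real.exp (-(l * x))) ∂νs)
    (hφspos : ∀ l : ℝ, 0 < l → 0 < φs l)
    (hφsdiff : ∀ l : ℝ, 0 < l → DifferentiableAt ℝ φs l)
    (hconj : ∀ l : ℝ, 0 < l → φ l * φs l = l)
    (H : Measure ℝ) (hH0 : H (Set.Iic 0) = 0)
    (hH : ∀ l : ℝ, 0 < l →
      ∫⁻ x, ENNReal.ofReal (x * Real.exp (-(l * x))) ∂H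
        = ENNReal.ofReal (deriv φ l / φ l))
    (Hs : Measure ℝ) (hHs0 : Hs (Set.Iic 0) = 0)
    (hHs : ∀ l : ℝ, 0 < l →
      ∫⁻ x, ENNReal.ofReal (x * Real.exp (-(l * x))) ∂Hs
        = ENNReal.ofReal (deriv φs l / φs l)) :
    H + Hs = (volume.restrict (Set.Ioi 0)).withDensity
        (fun x => ENNReal.ofReal x⁻¹) ∧
    ∃ ρ : ℝ → ℝ, Measurable ρ ∧ (∀ x : ℝ, 0 ≤ ρ x ∧ ρ x ≤ 1) ∧
      H = (volume.restrict (Set.Ioi 0)).withDensity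
        (fun x => ENNReal.ofReal (ρ x / x)) ∧
      Hs = (volume.restrict (Set.Ioi 0)).withDensity
        (fun x => ENNReal.ofReal ((1 - ρ x) / x)) := by
  set μ := (volume.restrict (Ioi 0)).withDensity fun x => ENNReal.ofReal x⁻¹
  have hlogDeriv_nonneg {ψ : ℝ → ℝ} (hψ : MonotoneOn ψ (Ici 0)) (hψpos : ∀ l, 0 < l → 0 < ψ l)
      {l : ℝ} (hl : 0 < l) : 0 ≤ deriv ψ l / ψ l :=
    div_nonneg (hψ.deriv_nonneg_of_mem_nhds (Ici_mem_nhds hl)) (hψpos l hl).le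
  have htransform (l : ℝ) (hl : 0 < l) : ∫⁻ x, ENNReal.ofReal (x * exp (-(l * x))) ∂(H + Hs)
      = ∫⁻ x, ENNReal.ofReal (x * exp (-(l * x))) ∂μ := by
    have hconj_nhds : φ * φs =ᶠ[𝓝 l] id :=
      eventually_of_mem (Ioi_mem_nhds hl) fun x hx => hconj x hx
    rw [lintegral_add_measure, hH l hl, hHs l hl,
      ← ENNReal.ofReal_add (hlogDeriv_nonneg (monotoneOn_of_levyKhintchine ha hν0 hνint hφ)
        hφpos hl) (hlogDeriv_nonneg (monotoneOn_of_levyKhintchine has hνs0 hνsint hφs) hφspos hl),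
      deriv_div_add_deriv_div_eq_inv (hφdiff l hl) (hφsdiff l hl) hconj_nhds (hφpos l hl).ne'
        (hφspos l hl).ne', lintegral_mul_exp_neg_mul_withDensity_inv hl]
  have hsum : H + Hs = μ := by
    refine ext_of_lintegral_mul_exp_neg_mul_eq (by simp [hH0, hHs0]) ?_ ?_ htransform
    · exact withDensity_absolutelyContinuous _ _
        (by simp [Measure.restrict_apply measurableSet_Iic, (Iic_disjoint_Ioi le_rfl).inter_eq])
    · rw [htransform 1 one_pos, lintegral_mul_exp_neg_mul_withDensity_inv one_pos]
      exact ENNReal.ofReal_ne_top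
  obtain ⟨ρ, hρ, hρ01, hHρ, hHsρ⟩ := exists_eq_withDensity_of_add_eq hsum
  refine ⟨hsum, ρ, hρ, hρ01, ?_, ?_⟩
  · rwa [withDensity_ofReal_div_eq hρ fun x => (hρ01 x).1]
  · rwa [withDensity_ofReal_div_eq (r := fun x => 1 - ρ x) (by fun_prop)
      fun x => sub_nonneg.mpr (hρ01 x).2]

/-- for a conjugate pair `(φ, φ*)` of special Bernstein functions
(`φ(λ) φ*(λ) = λ`), the harmonic potential measures satisfy
`H(dx) + H*(dx) = x^{-1} dx` on `(0,∞)`; consequently there is a measurable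
`ρ : (0,∞) → [0,1]` with `H(dx) = ρ(x) x^{-1} dx` and `H*(dx) = (1−ρ(x)) x^{-1} dx`. -/
theorem stmt19
    (q a : ℝ) (hq : 0 ≤ q) (ha : 0 ≤ a)
    (ν : Measure ℝ) (hν0 : ν (Set.Iic 0) = 0)
    (hνint : ∫⁻ x, ENNReal.ofReal (min x 1) ∂ν < ⊤)
    (hnz : ¬(q = 0 ∧ a = 0 ∧ ν = 0))
    (φ : ℝ → ℝ)
    (hφ : ∀ l : ℝ, 0 ≤ l → φ l = q + a * l + ∫ x, (1 - Real.exp (-(l * x))) ∂ν)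
    (hφpos : ∀ l : ℝ, 0 < l → 0 < φ l)
    (hφdiff : ∀ l : ℝ, 0 < l → DifferentiableAt ℝ φ l)
    (qs as : ℝ) (hqs : 0 ≤ qs) (has : 0 ≤ as)
    (νs : Measure ℝ) (hνs0 : νs (Set.Iic 0) = 0)
    (hνsint : ∫⁻ x, ENNReal.ofReal (min x 1) ∂νs < ⊤)
    (hnzs : ¬(qs = 0 ∧ as = 0 ∧ νs = 0))
    (φs : ℝ → ℝ)
    (hφs : ∀ l : ℝ, 0 ≤ l → φs l = qs + as * l + ∫ x, (1 - Real.exp (-(l * x))) ∂νs)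
    (hφspos : ∀ l : ℝ, 0 < l → 0 < φs l)
    (hφsdiff : ∀ l : ℝ, 0 < l → DifferentiableAt ℝ φs l)
    (hconj : ∀ l : ℝ, 0 < l → φ l * φs l = l)
    (H : Measure ℝ) (hH0 : H (Set.Iic 0) = 0)
    (hH : ∀ l : ℝ, 0 < l →
      ∫⁻ x, ENNReal.ofReal (x * Real.exp (-(l * x))) ∂H
        = ENNReal.ofReal (deriv φ l / φ l))
    (Hs : Measure ℝ) (hHs0 : Hs (Set.Iic 0) = 0)
    (hHs : ∀ l : ℝ, 0 < l →
      ∫⁻ x, ENNReal.ofReal (x * Real.exp (-(l * x))) ∂Hs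
        = ENNReal.ofReal (deriv φs l / φs l)) :
    H + Hs = (volume.restrict (Set.Ioi 0)).withDensity
        (fun x => ENNReal.ofReal x⁻¹) ∧
    ∃ ρ : ℝ → ℝ, Measurable ρ ∧ (∀ x : ℝ, 0 ≤ ρ x ∧ ρ x ≤ 1) ∧
      H = (volume.restrict (Set.Ioi 0)).withDensity
        (fun x => ENNReal.ofReal (ρ x / x)) ∧
      Hs = (volume.restrict (Set.Ioi 0)).withDensity
        (fun x => ENNReal.ofReal ((1 - ρ x) / x)) :=
  stmt19_general q a ha ν hν0 hνint φ hφ hφpos hφdiff qs as has νs hνs0 hνsint φs hφs hφspos hφsdiff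
    hconj H hH0 hH Hs hHs0 hHs
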